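/- Consistency of the A₂ scattering diagram without the singularity (the first computation in the proof of Lemma 5.9): as automorphisms of K = ℂ(x,y), 𝒦_{(1,0)}^{−1} ∘ 𝒦_{(0,1)}^{−1} ∘ 𝒦_{(1,0)} ∘ 𝒦_{(1,1)} ∘ 𝒦_{(0,1)} is the identity; equivalently, for every (a₁,a₂) ∈ ℤ² the path-ordered product of the wall-crossing transformations around a full anticlockwise loop crossing the five walls with wall functions 1+y, 1+xy, 1+x, 1+y, 1+x (the last two crossed in the negative direction) fixes x^{a₁} y^{a₂}. -/

import Mathlib

open MvPolynomial

noncomputable section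

/-- `K = ℂ(x,y)`, the field of rational functions in two variables over `ℂ`. -/
abbrev K : Type := FractionRing (MvPolynomial (Fin 2) ℂ)

/-- The rational function `x`. -/
noncomputable def xx : K := algebraMap (MvPolynomial (Fin 2) ℂ) K (X 0)

/-- The rational function `y`. -/
noncomputable def yy : K := algebraMap (MvPolynomial (Fin 2) ℂ) K (X 1)

/-- `z^μ = x^m y^n` for `μ = (m,n) ∈ ℤ²`. -/
noncomputable def zmon (μ : ℤ × ℤ) : K := xx ^ μ.1 * yy ^ μ.2

/-- `⟨μ,γ⟩ = m b − n a` for `μ = (m,n)`, `γ = (a,b)`. -/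
def pairing (μ γ : ℤ × ℤ) : ℤ := μ.1 * γ.2 - μ.2 * γ.1

/-- `Φ` is the wall-crossing transformation `𝒦_{γ,d}`: the `ℂ`-algebra automorphism of `K`
satisfying `𝒦_{γ,d}(z^μ) = z^μ (1+z^γ)^{d⟨μ,γ⟩}` for all `μ ∈ ℤ²`. -/
def IsWallCrossing (d : ℤ) (γ : ℤ × ℤ) (Φ : K ≃ₐ[ℂ] K) : Prop :=
  ∀ μ : ℤ × ℤ, Φ (zmon μ) = zmon μ * (1 + zmon γ) ^ (d * pairing μ γ)

/-! The loop is trivial because of the pentagon identity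
`𝒦_{(1,0)} ∘ 𝒦_{(1,1)} ∘ 𝒦_{(0,1)} = 𝒦_{(0,1)} ∘ 𝒦_{(1,0)}`: both sides send
`x ↦ x(1+y)` and `y ↦ y/(1+x+xy)`, and a `ℂ`-algebra endomorphism of `ℂ(x,y)` is
determined by the images of `x` and `y`. -/

theorem IsLocalization.mvPolynomial_algHom_ext {R σ L B : Type*} [CommSemiring R]
    [CommSemiring L] [Semiring B] (W : Submonoid (MvPolynomial σ R))
    [Algebra (MvPolynomial σ R) L] [IsLocalization W L] [Algebra R L]
    [IsScalarTower R (MvPolynomial σ R) L] [Algebra R B] {f g : L →ₐ[R] B}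
    (h : ∀ i, f (algebraMap (MvPolynomial σ R) L (X i)) =
      g (algebraMap (MvPolynomial σ R) L (X i))) :
    f = g := by
  apply IsLocalization.algHom_ext W
  ext i
  exact h i

theorem IsFractionRing.one_add_algebraMap_ne_zero {R σ L : Type*} [CommRing R] [Nontrivial R]
    [CommRing L] [Algebra (MvPolynomial σ R) L] [IsFractionRing (MvPolynomial σ R) L]
    {p : MvPolynomial σ R} (hp : constantCoeff p = 0) :
    1 + algebraMap (MvPolynomial σ R) L p ≠ 0 := by
  rw [← map_one (algebraMap (MvPolynomial σ R) L), ← map_add,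
    map_ne_zero_iff _ (IsFractionRing.injective (MvPolynomial σ R) L)]
  intro h
  simpa [hp] using congrArg constantCoeff h

theorem algHom_ext_of_xx_of_yy {f g : K →ₐ[ℂ] K} (hx : f xx = g xx) (hy : f yy = g yy) :
    f = g :=
  IsLocalization.mvPolynomial_algHom_ext (σ := Fin 2) (R := ℂ) (nonZeroDivisors _) fun i => by
    fin_cases i <;> assumption

theorem one_add_xx_ne_zero : 1 + xx ≠ 0 :=
  IsFractionRing.one_add_algebraMap_ne_zero (p := X 0) (by simp)

theorem one_add_xx_mul_yy_ne_zero : 1 + xx * yy ≠ 0 := by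
  have h := IsFractionRing.one_add_algebraMap_ne_zero (L := K)
    (p := (X 0 * X 1 : MvPolynomial (Fin 2) ℂ)) (by simp)
  rwa [map_mul] at h

theorem one_add_xx_add_xx_mul_yy_ne_zero : 1 + xx + xx * yy ≠ 0 := by
  have h := IsFractionRing.one_add_algebraMap_ne_zero (L := K)
    (p := (X 0 + X 0 * X 1 : MvPolynomial (Fin 2) ℂ)) (by simp)
  rwa [map_add, map_mul, ← add_assoc] at h

namespace IsWallCrossing

variable {d : ℤ} {γ : ℤ × ℤ} {Φ : K ≃ₐ[ℂ] K}

theorem apply_xx (h : IsWallCrossing d γ Φ) : Φ xx = xx * (1 + zmon γ) ^ (d * γ.2) := by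
  simpa [zmon, pairing] using h (1, 0)

theorem apply_yy (h : IsWallCrossing d γ Φ) : Φ yy = yy * (1 + zmon γ) ^ (-(d * γ.1)) := by
  simpa [zmon, pairing, zpow_neg] using h (0, 1)

end IsWallCrossing

theorem wallCrossing_pentagon {K01 K11 K10 : K ≃ₐ[ℂ] K}
    (h01 : IsWallCrossing 1 (0, 1) K01) (h11 : IsWallCrossing 1 (1, 1) K11)
    (h10 : IsWallCrossing 1 (1, 0) K10) :
    K01.trans (K11.trans K10) = K10.trans K01 := by
  have e01x : K01 xx = xx * (1 + yy) := by simpa [zmon] using h01.apply_xx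
  have e01y : K01 yy = yy := by simpa using h01.apply_yy
  have e11x : K11 xx = xx * (1 + xx * yy) := by simpa [zmon] using h11.apply_xx
  have e11y : K11 yy = yy * (1 + xx * yy)⁻¹ := by simpa [zmon] using h11.apply_yy
  have e10x : K10 xx = xx := by simpa using h10.apply_xx
  have e10y : K10 yy = yy * (1 + xx)⁻¹ := by simpa [zmon] using h10.apply_yy
  have := one_add_xx_ne_zero
  have := one_add_xx_mul_yy_ne_zero
  have := one_add_xx_add_xx_mul_yy_ne_zero
  apply AlgEquiv.coe_toAlgHom_injective
  apply algHom_ext_of_xx_of_yy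
  · simp only [AlgEquiv.coe_toAlgHom, AlgEquiv.trans_apply, map_mul, map_add, map_one, map_inv₀,
      e01x, e11x, e11y, e10x, e10y]
    field_simp
    ring
  · simp only [AlgEquiv.coe_toAlgHom, AlgEquiv.trans_apply, map_mul, map_add, map_one, map_inv₀,
      e01x, e01y, e11y, e10x, e10y]
    field_simp
    ring

/-- Consistency of the A₂ scattering diagram without the singularity: as automorphisms
of `K = ℂ(x,y)`, the composite `𝒦_{(1,0)}⁻¹ ∘ 𝒦_{(0,1)}⁻¹ ∘ 𝒦_{(1,0)} ∘ 𝒦_{(1,1)} ∘ 𝒦_{(0,1)}`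
is the identity; i.e. the path-ordered product around a full anticlockwise loop crossing
the five walls fixes every element (in particular every monomial `x^{a₁}y^{a₂}`). -/
theorem A2_full_loop_consistency
    (K01 K11 K10 : K ≃ₐ[ℂ] K)
    (h01 : IsWallCrossing 1 (0, 1) K01) (h11 : IsWallCrossing 1 (1, 1) K11)
    (h10 : IsWallCrossing 1 (1, 0) K10) :
    ∀ f : K, K10.symm (K01.symm (K10 (K11 (K01 f)))) = f := by
  intro f
  have hf : K10 (K11 (K01 f)) = K01 (K10 f) :=
    AlgEquiv.congr_fun (wallCrossing_pentagon h01 h11 h10) f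
  rw [hf, AlgEquiv.symm_apply_apply, AlgEquiv.symm_apply_apply]

end
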